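/- arXiv:1809.08112 — 4 statements merged into one kernel-verified Lean document; each statement's English description precedes it below -/
import Mathlib

section
/- Let n, r, d be natural numbers with n ≥ 1 and r ≥ 2. Let w : Fin (d+1) → Equiv.Perm (Fin r) be a non-degenerate tuple of permutations (i.e. w i ≠ w (i+1) for every adjacent pair of indices i). If for every pair of distinct elements j, k of Fin r the variation count μ_{j,k}(w) is strictly less than n, then d < n * r * (r - 1) / 2. (This is the degree bound for the arity-r component of the filtration stage 𝓔_n of the Barratt–Eccles operad: 𝓔_n(r) is concentrated in degrees ≥ 0 and < n·r·(r−1)/2.) -/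
open Classical in
/-- The variation count `μ_{j,k}` of a tuple of permutations: the number of indices `i`
such that the relative order in which `j` and `k` occur in the value sequence of `w i`
differs from that of `w (i+1)`. -/
noncomputable def variationCount {r d : ℕ} (w : Fin (d + 1) → Equiv.Perm (Fin r))
    (j k : Fin r) : ℕ :=
  (Finset.univ.filter fun i : Fin d =>
    (((w i.castSucc)⁻¹ j < (w i.castSucc)⁻¹ k) ≠
      ((w i.succ)⁻¹ j < (w i.succ)⁻¹ k))).card

/-! Every step `w i ≠ w (i+1)` of a non-degenerate tuple reverses the relative order of at least
one pair `j < k`, since a permutation of a well-order is determined by the relative order of the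
positions of its values. Hence `d ≤ ∑_{j<k} μ_{j,k}(w) < n · (r choose 2)`. -/

open Finset

namespace Equiv.Perm

variable {α : Type*} [LinearOrder α] [WellFoundedLT α]

theorem eq_of_forall_inv_lt_iff {σ τ : Perm α}
    (h : ∀ j k, σ⁻¹ j < σ⁻¹ k ↔ τ⁻¹ j < τ⁻¹ k) : σ = τ := by
  have hmono : StrictMono (σ⁻¹ * τ) := fun a b hab => (h (τ a) (τ b)).2 (by simpa using hab)
  have hid : σ⁻¹ * τ = 1 := Equiv.ext fun a =>
    DFunLike.congr_fun
      (Subsingleton.elim (hmono.orderIsoOfSurjective _ (σ⁻¹ * τ).surjective) (OrderIso.refl α)) a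
  exact inv_mul_eq_one.mp hid

theorem exists_lt_and_inv_lt_ne_of_ne {σ τ : Perm α} (hστ : σ ≠ τ) :
    ∃ j k, j < k ∧ (σ⁻¹ j < σ⁻¹ k) ≠ (τ⁻¹ j < τ⁻¹ k) := by
  contrapose! hστ
  refine eq_of_forall_inv_lt_iff fun j k => ?_
  rcases lt_trichotomy j k with hjk | rfl | hkj
  · exact (hστ j k hjk).to_iff
  · exact iff_of_false (lt_irrefl _) (lt_irrefl _)
  · rw [← not_le, ← not_le, (σ⁻¹.injective.ne hkj.ne).le_iff_lt,
      (τ⁻¹.injective.ne hkj.ne).le_iff_lt, (hστ k j hkj).to_iff]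

end Equiv.Perm

theorem le_sum_variationCount {r d : ℕ} (w : Fin (d + 1) → Equiv.Perm (Fin r))
    (hw : ∀ i : Fin d, w i.castSucc ≠ w i.succ) :
    d ≤ ∑ p ∈ univ.filter (fun p : Fin r × Fin r => p.1 < p.2), variationCount w p.1 p.2 := by
  have hcover : (univ : Finset (Fin d)) ⊆
      (univ.filter fun p : Fin r × Fin r => p.1 < p.2).biUnion fun p =>
        univ.filter fun i : Fin d =>
          ((w i.castSucc)⁻¹ p.1 < (w i.castSucc)⁻¹ p.2) ≠ ((w i.succ)⁻¹ p.1 < (w i.succ)⁻¹ p.2) := by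
    intro i _
    obtain ⟨j, k, hjk, hflip⟩ := Equiv.Perm.exists_lt_and_inv_lt_ne_of_ne (hw i)
    simp only [mem_biUnion, mem_filter, mem_univ, true_and]
    exact ⟨(j, k), hjk, hflip⟩
  calc d = #(univ : Finset (Fin d)) := (card_fin d).symm
    _ ≤ _ := (card_le_card hcover).trans card_biUnion_le
    _ = _ := by simp only [variationCount]

theorem barrattEccles_En_degree_bound_general (n r d : ℕ) (hr : 2 ≤ r)
    (w : Fin (d + 1) → Equiv.Perm (Fin r))
    (hw : ∀ i : Fin d, w i.castSucc ≠ w i.succ)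
    (hvar : ∀ j k : Fin r, j ≠ k → variationCount w j k < n) :
    d < n * r * (r - 1) / 2 := by
  set pairs := univ.filter fun p : Fin r × Fin r => p.1 < p.2
  have hcard : #pairs = r.choose 2 := by simpa using Fintype.card_product_filter_lt (α := Fin r)
  have hpairs : pairs.Nonempty := card_pos.mp (hcard ▸ Nat.choose_pos hr)
  calc d ≤ ∑ p ∈ pairs, variationCount w p.1 p.2 := le_sum_variationCount w hw
    _ < ∑ _p ∈ pairs, n := sum_lt_sum_of_nonempty hpairs fun p hp =>
        hvar p.1 p.2 (mem_filter.mp hp).2.ne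
    _ = n * r * (r - 1) / 2 := by
        rw [sum_const, hcard, smul_eq_mul, Nat.choose_two_right, mul_comm, mul_assoc,
          Nat.mul_div_assoc _ (Nat.even_mul_pred_self r).two_dvd]

/-- The degree bound for the arity-`r` component of the filtration stage `𝓔_n` of the
Barratt–Eccles operad: a non-degenerate tuple of permutations all of whose pairwise
variation counts are `< n` has degree `d < n * r * (r - 1) / 2`. -/
theorem barrattEccles_En_degree_bound (n r d : ℕ) (hn : 1 ≤ n) (hr : 2 ≤ r)
    (w : Fin (d + 1) → Equiv.Perm (Fin r))
    (hw : ∀ i : Fin d, w i.castSucc ≠ w i.succ)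
    (hvar : ∀ j k : Fin r, j ≠ k → variationCount w j k < n) :
    d < n * r * (r - 1) / 2 :=
  barrattEccles_En_degree_bound_general n r d hr w hw hvar
end

section
/- Let r, d be natural numbers and let w : Fin (d+1) → Equiv.Perm (Fin r) be a non-degenerate tuple of permutations (i.e. w i ≠ w (i+1) for every adjacent pair of indices i). Then d is at most the sum, over all unordered pairs of distinct elements j, k of Fin r, of the variation counts μ_{j,k}(w). In other words, the homological degree of a non-degenerate Barratt–Eccles element is bounded by its total number of variations. -/
/-! Each step `w i ≠ w (i+1)` changes the relative order of at least one pair, because a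
permutation of a well-order is determined by the relative order of its values; counting the
pairs `(i, {j, k})` with a change at `i` in two ways gives the bound. -/

open Finset

theorem Finset.card_le_sum_card_bipartiteBelow {α β : Type*} {s : Finset α} {t : Finset β}
    (r : α → β → Prop) [∀ a b, Decidable (r a b)] (hs : ∀ a ∈ s, ∃ b ∈ t, r a b) :
    #s ≤ ∑ b ∈ t, #(s.bipartiteBelow r b) := by
  rw [← sum_card_bipartiteAbove_eq_sum_card_bipartiteBelow, card_eq_sum_ones]
  refine sum_le_sum fun a ha => card_pos.mpr ?_
  obtain ⟨b, hb, hab⟩ := hs a ha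
  exact ⟨b, mem_bipartiteAbove r |>.mpr ⟨hb, hab⟩⟩

namespace Equiv.Perm

variable {α : Type*} [LinearOrder α] [WellFoundedLT α]

theorem eq_of_forall_lt_inv_lt_iff {σ τ : Perm α}
    (h : ∀ j k, j < k → (σ⁻¹ j < σ⁻¹ k ↔ τ⁻¹ j < τ⁻¹ k)) : σ = τ := by
  have hmono : StrictMono (σ⁻¹ * τ) := by
    intro a b hab
    rcases (τ.injective.ne hab.ne).lt_or_gt with hτ | hτ
    · simpa using (h _ _ hτ).mpr (by simpa using hab)
    · have hba : ¬ (σ⁻¹ * τ) b < (σ⁻¹ * τ) a := by simpa using (h _ _ hτ).not.mpr (by simpa using hab.not_gt)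
      exact (not_lt.mp hba).lt_of_ne ((σ⁻¹ * τ).injective.ne hab.ne)
  have hid := congrArg DFunLike.coe
    (Subsingleton.elim (hmono.orderIsoOfSurjective _ (σ⁻¹ * τ).surjective) (OrderIso.refl α))
  rw [StrictMono.coe_orderIsoOfSurjective, OrderIso.coe_refl, ← Perm.coe_one,
    DFunLike.coe_fn_eq, inv_mul_eq_one] at hid
  exact hid

theorem exists_lt_inv_lt_ne_of_ne {σ τ : Perm α} (h : σ ≠ τ) :
    ∃ j k, j < k ∧ (σ⁻¹ j < σ⁻¹ k) ≠ (τ⁻¹ j < τ⁻¹ k) := by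
  by_contra! H
  exact h (eq_of_forall_lt_inv_lt_iff fun j k hjk => (H j k hjk).to_iff)

end Equiv.Perm

/-- The homological degree of a non-degenerate Barratt–Eccles element is bounded by its
total number of variations: `d` is at most the sum, over all unordered pairs of distinct
elements `j, k` of `Fin r`, of the variation counts `μ_{j,k}(w)`. -/
theorem degree_le_total_variations (r d : ℕ)
    (w : Fin (d + 1) → Equiv.Perm (Fin r))
    (hw : ∀ i : Fin d, w i.castSucc ≠ w i.succ) :
    d ≤ ∑ p ∈ Finset.univ.filter (fun p : Fin r × Fin r => p.1 < p.2),
          variationCount w p.1 p.2 := by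
  classical
  let flipsAt (i : Fin d) (p : Fin r × Fin r) : Prop :=
    ((w i.castSucc)⁻¹ p.1 < (w i.castSucc)⁻¹ p.2) ≠ ((w i.succ)⁻¹ p.1 < (w i.succ)⁻¹ p.2)
  have hcount : ∀ p : Fin r × Fin r,
      variationCount w p.1 p.2 = #((univ : Finset (Fin d)).bipartiteBelow flipsAt p) := by
    intro p
    unfold variationCount bipartiteBelow
    congr
  simp only [hcount]
  calc d = #(univ : Finset (Fin d)) := (Finset.card_fin d).symm
    _ ≤ _ := card_le_sum_card_bipartiteBelow flipsAt fun i _ => by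
      obtain ⟨j, k, hjk, hflip⟩ := Equiv.Perm.exists_lt_inv_lt_ne_of_ne (hw i)
      exact ⟨(j, k), by simpa using hjk, hflip⟩
end

section
/- Let X be a based simplicial set with basepoint *. The non-degenerate simplices of the reduced suspension ΣX are exactly the basepoint together with the simplices of the form (x, 1) where x is a non-degenerate simplex of X. In particular, the assignment x ↦ (x, 1) is a dimension-raising bijection between the non-degenerate simplices of X other than the basepoint and the non-degenerate simplices of ΣX other than the basepoint. -/
open Classical

/-- A based simplicial set, described combinatorially: a family of types of `n`-simplices
with a basepoint in each dimension, face maps `d n i : X (n+1) → X n` (for `i ≤ n+1`) and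
degeneracy maps `s n i : X n → X (n+1)` (for `i ≤ n`), satisfying the simplicial
identities, and such that the basepoint simplices are preserved by all faces and
degeneracies. -/
structure BasedSSet where
  X : ℕ → Type
  pt : ∀ n, X n
  d : ∀ n, ℕ → X (n + 1) → X n
  s : ∀ n, ℕ → X n → X (n + 1)
  d_pt : ∀ n i, i ≤ n + 1 → d n i (pt (n + 1)) = pt n
  s_pt : ∀ n i, i ≤ n → s n i (pt n) = pt (n + 1)
  dd : ∀ n i j, i < j → j ≤ n + 2 → ∀ x : X (n + 2),
      d n i (d (n + 1) j x) = d n (j - 1) (d (n + 1) i x)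
  ss : ∀ n i j, i ≤ j → j ≤ n → ∀ x : X n,
      s (n + 1) i (s n j x) = s (n + 1) (j + 1) (s n i x)
  ds_lt : ∀ n i j, i < j → j ≤ n + 1 → ∀ x : X (n + 1),
      d (n + 1) i (s (n + 1) j x) = s n (j - 1) (d n i x)
  ds_eq : ∀ n j, j ≤ n → ∀ x : X n, d n j (s n j x) = x
  ds_eq' : ∀ n j, j ≤ n → ∀ x : X n, d n (j + 1) (s n j x) = x
  ds_gt : ∀ n i j, j + 1 < i → i ≤ n + 2 → j ≤ n → ∀ x : X (n + 1),
      d (n + 1) i (s (n + 1) j x) = s n j (d n (i - 1) x)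

/-- A simplex of the reduced suspension `ΣX` other than the basepoint: a pair `(x, j)`
with `1 ≤ j`, `x` an `m`-simplex of `X` with `m + j = n`, and `x` not the basepoint. -/
structure SuspCell (X : BasedSSet) (n : ℕ) where
  j : ℕ
  m : ℕ
  x : X.X m
  hj : 1 ≤ j
  hdim : m + j = n
  hx : x ≠ X.pt m

/-- The `n`-simplices of the reduced suspension `ΣX`: the basepoint `none` (the common
image of all the simplices `(*, j)` and `(x, 0)`) together with the cells `(x, j)`. -/
abbrev SuspSimplex (X : BasedSSet) (n : ℕ) : Type := Option (SuspCell X n)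

/-- The degeneracy maps of the reduced suspension:
`s_i (x, j) = (x, j+1)` for `i < j` and `s_i (x, j) = (s_{i-j} x, j)` for `i ≥ j`,
with the basepoint sent to the basepoint. -/
noncomputable def BasedSSet.suspS (X : BasedSSet) (n i : ℕ) :
    SuspSimplex X n → SuspSimplex X (n + 1)
  | none => none
  | some c =>
      if i < c.j then
        some ⟨c.j + 1, c.m, c.x, by omega, by have := c.hdim; omega, c.hx⟩
      else if h : X.s c.m (i - c.j) c.x = X.pt (c.m + 1) then none
      else some ⟨c.j, c.m + 1, X.s c.m (i - c.j) c.x, c.hj, by have := c.hdim; omega, h⟩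

/-- Non-degeneracy of a simplex: it is not of the form `s_i y`. -/
def BasedSSet.Nondeg (X : BasedSSet) : ∀ n, X.X n → Prop
  | 0, _ => True
  | n + 1, x => ∀ i, i ≤ n → ∀ y : X.X n, x ≠ X.s n i y

/-- Non-degeneracy of a simplex of the reduced suspension. -/
def SuspNondeg (X : BasedSSet) : ∀ n, SuspSimplex X n → Prop
  | 0, _ => True
  | n + 1, z => ∀ i, i ≤ n → ∀ y : SuspSimplex X n, z ≠ X.suspS n i y

lemma susp_aux (X : BasedSSet) : ∀ (n : ℕ) (x : X.X n) (hx : x ≠ X.pt n),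
    ¬ X.Nondeg n x → ∀ (hj : 1 ≤ 1) (hd : n + 1 = n + 1),
    ¬ SuspNondeg X (n + 1) (some ⟨1, n, x, hj, hd, hx⟩)
  | 0, _, _, hnd, _, _ => fun _ => hnd trivial
  | k+1, x, hx, hnd, hj, hd => fun h => by
    simp only [BasedSSet.Nondeg, not_forall] at hnd
    obtain ⟨i, hik, y, hxy⟩ := hnd
    simp only [ne_eq, Decidable.not_not] at hxy
    subst hxy
    have hy : y ≠ X.pt k := by
      intro hy0; subst hy0
      exact hx (X.s_pt k i hik)
    apply h (i+1) (by omega) (some ⟨1, k, y, le_refl 1, rfl, hy⟩)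
    simp only [BasedSSet.suspS]
    rw [if_neg (by omega)]
    simp only [Nat.add_sub_cancel]
    rw [dif_neg hx]

/-- The non-degenerate simplices of the reduced suspension `ΣX` are exactly the basepoint
(in dimension `0`) together with the simplices `(x, 1)` where `x` is a non-degenerate
simplex of `X` other than the basepoint.  In particular, `x ↦ (x, 1)` is a
dimension-raising bijection between the non-degenerate simplices of `X` other than the
basepoint and the non-degenerate simplices of `ΣX` other than the basepoint. -/
theorem susp_nondegenerate_simplices (X : BasedSSet) :
    (∀ (n : ℕ) (z : SuspSimplex X n),
        SuspNondeg X n z ↔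
          (n = 0 ∧ z = none) ∨
            ∃ (m : ℕ) (x : X.X m) (hx : x ≠ X.pt m) (hd : m + 1 = n),
              X.Nondeg m x ∧ z = some ⟨1, m, x, le_refl 1, hd, hx⟩) ∧
    (∀ (m : ℕ) (x y : X.X m) (hx : x ≠ X.pt m) (hy : y ≠ X.pt m),
        (some ⟨1, m, x, le_refl 1, rfl, hx⟩ : SuspSimplex X (m + 1)) =
          some ⟨1, m, y, le_refl 1, rfl, hy⟩ → x = y) := by
  constructor
  · intro n z
    match n, z with
    | 0, none => simp [SuspNondeg]
    | 0, some c => exact absurd c.hdim (by have := c.hj; omega)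
    | n+1, z =>
      constructor
      · intro h
        match z with
        | none => exact absurd rfl (h 0 (Nat.zero_le n) none)
        | some c =>
          obtain ⟨j, m, x, hj, hdim, hx⟩ := c
          rcases Nat.lt_or_ge j 2 with hj2 | hj2
          · have hj1 : j = 1 := by omega
            subst hj1
            obtain rfl : n = m := by omega
            by_cases hnd : X.Nondeg n x
            · right; exact ⟨n, x, hx, rfl, hnd, rfl⟩
            · exact absurd h (susp_aux X n x hx hnd hj hdim)
          · exfalso
            apply h 0 (Nat.zero_le n) (some ⟨j - 1, m, x, by omega, by omega, hx⟩)
            simp only [BasedSSet.suspS]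
            rw [if_pos (by omega)]
            simp only [Option.some.injEq, SuspCell.mk.injEq, heq_eq_eq,
              true_and, and_true]
            omega
      · rintro (⟨h0, -⟩ | ⟨m, x, hx, hd, hnd, rfl⟩)
        · exact absurd h0 (by omega)
        · obtain rfl : n = m := by omega
          intro i hi y heq
          match y with
          | none => simp [BasedSSet.suspS] at heq
          | some c =>
            obtain ⟨j', m', x', hj', hdim', hx'⟩ := c
            simp only [BasedSSet.suspS] at heq
            split_ifs at heq with h1 h2
            all_goals simp only [Option.some.injEq, SuspCell.mk.injEq] at heq
            all_goals first
              | (obtain ⟨he1, -⟩ := heq; omega)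
              | (obtain ⟨he1, he2, he3⟩ := heq
                 subst he2
                 exact hnd (i - j') (by omega) x' (eq_of_heq he3))
  · intro m x y hx hy h
    simpa using h
end

section
/- Let K be a commutative ring and let X be a based simplicial set. There is a natural isomorphism of chain complexes of K-modules φ : s Ñ_*(X; K) → Ñ_*(ΣX; K), defined on generators by φ(s x) = (x, 1) for each non-degenerate simplex x of X, where s Ñ_*(X; K) is the suspension of the reduced normalized chain complex of X (the complex with (s V)_k = V_{k−1} and differential given by the Koszul sign rule, i.e. d(s v) = − s (d v)), and Ñ_*(ΣX; K) is the reduced normalized chain complex of the reduced suspension ΣX. Naturality means that for every based simplicial map f : X → Y the isomorphisms commute with the induced maps on reduced normalized chains. -/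
open Classical

/-- The face maps of `X`, as total functions `X m → X (m - 1)` (with a junk value in
dimension `0`). -/
def BasedSSet.d' (X : BasedSSet) : ∀ m, ℕ → X.X m → X.X (m - 1)
  | 0, _, x => x
  | m + 1, i, x => X.d m i x

/-- The face maps of the reduced suspension:
`d_i (x, j) = (x, j - 1)` for `i < j` (which is the basepoint when `j = 1`) and
`d_i (x, j) = (d_{i-j} x, j)` for `i ≥ j`, with the basepoint sent to the basepoint. -/
noncomputable def BasedSSet.suspD (X : BasedSSet) (n i : ℕ) :
    SuspSimplex X (n + 1) → SuspSimplex X n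
  | none => none
  | some c =>
      if i < c.j then
        if hj1 : c.j = 1 then none
        else some ⟨c.j - 1, c.m, c.x, by have := c.hj; omega,
          by have := c.hdim; have := c.hj; omega, c.hx⟩
      else if hm : c.m = 0 then none
      else if h : X.d' c.m (i - c.j) c.x = X.pt (c.m - 1) then none
      else some ⟨c.j, c.m - 1, X.d' c.m (i - c.j) c.x, c.hj,
        by have := c.hdim; omega, h⟩

/-- The data needed to form a reduced normalized chain complex: a family of types of
simplices, basepoints, a non-degeneracy predicate and face maps. -/
structure ChainData where
  C : ℕ → Type
  pt : ∀ n, C n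
  nd : ∀ n, C n → Prop
  face : ∀ n, ℕ → C (n + 1) → C n

/-- The chain data of a based simplicial set. -/
def BasedSSet.toData (X : BasedSSet) : ChainData :=
  ⟨X.X, X.pt, X.Nondeg, X.d⟩

/-- The chain data of the reduced suspension of a based simplicial set. -/
noncomputable def BasedSSet.suspData (X : BasedSSet) : ChainData :=
  ⟨SuspSimplex X, fun _ => none, SuspNondeg X, X.suspD⟩

/-- The degree-`n` part of the reduced normalized chains over `K`: the free `K`-module on
the non-degenerate `n`-simplices other than the basepoint. -/
abbrev RedChains (K : Type) [CommRing K] (D : ChainData) (n : ℕ) : Type :=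
  {x : D.C n // D.nd n x ∧ x ≠ D.pt n} →₀ K

/-- The class of a simplex in the reduced normalized chains: the corresponding generator
if it is non-degenerate and not the basepoint, and `0` otherwise. -/
noncomputable def elemOf (K : Type) [CommRing K] (D : ChainData) (n : ℕ) (y : D.C n) :
    RedChains K D n :=
  if h : D.nd n y ∧ y ≠ D.pt n then Finsupp.single ⟨y, h⟩ 1 else 0

/-- The differential of the reduced normalized chains: the alternating sum of the face
maps, where degenerate faces and faces at the basepoint are set to `0`. -/
noncomputable def redD (K : Type) [CommRing K] (D : ChainData) (n : ℕ) :
    RedChains K D (n + 1) →ₗ[K] RedChains K D n :=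
  Finsupp.lift (RedChains K D n) K
    {x : D.C (n + 1) // D.nd (n + 1) x ∧ x ≠ D.pt (n + 1)} fun x =>
      ∑ i ∈ Finset.range (n + 2), ((-1 : K) ^ i) • elemOf K D n (D.face n i x.1)

/-- The underlying graded module of the suspension `s Ñ_*(X; K)` of the reduced
normalized chain complex of `X`: `(s V)_k = V_{k-1}`, with `(s V)_0 = 0`. -/
def SChain (K : Type) [CommRing K] (X : BasedSSet) : ℕ → Type
  | 0 => Empty →₀ K
  | n + 1 => RedChains K X.toData n

noncomputable instance (K : Type) [CommRing K] (X : BasedSSet) :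
    ∀ n, AddCommGroup (SChain K X n)
  | 0 => inferInstanceAs (AddCommGroup (Empty →₀ K))
  | n + 1 => inferInstanceAs (AddCommGroup (RedChains K X.toData n))

noncomputable instance (K : Type) [CommRing K] (X : BasedSSet) :
    ∀ n, Module K (SChain K X n)
  | 0 => inferInstanceAs (Module K (Empty →₀ K))
  | n + 1 => inferInstanceAs (Module K (RedChains K X.toData n))

/-- The differential of the suspension `s Ñ_*(X; K)`, with the Koszul sign rule:
`d (s v) = - s (d v)`. -/
noncomputable def sD (K : Type) [CommRing K] (X : BasedSSet) :
    ∀ n, SChain K X (n + 1) →ₗ[K] SChain K X n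
  | 0 => 0
  | n + 1 => -redD K X.toData n

/-- A based simplicial map between based simplicial sets. -/
structure BasedHom (X Y : BasedSSet) where
  f : ∀ n, X.X n → Y.X n
  hpt : ∀ n, f n (X.pt n) = Y.pt n
  hd : ∀ n i, i ≤ n + 1 → ∀ x : X.X (n + 1), f n (X.d n i x) = Y.d n i (f (n + 1) x)
  hs : ∀ n i, i ≤ n → ∀ x : X.X n, f (n + 1) (X.s n i x) = Y.s n i (f n x)

/-- The map induced on reduced normalized chains by a map of simplices (sending the
classes of degenerate or basepoint simplices to `0`). -/
noncomputable def chainMap (K : Type) [CommRing K] (D E : ChainData)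
    (g : ∀ n, D.C n → E.C n) (n : ℕ) : RedChains K D n →ₗ[K] RedChains K E n :=
  Finsupp.lift (RedChains K E n) K
    {x : D.C n // D.nd n x ∧ x ≠ D.pt n} fun x => elemOf K E n (g n x.1)

/-- The map induced on reduced suspensions by a based simplicial map. -/
noncomputable def suspMap {X Y : BasedSSet} (F : BasedHom X Y) (n : ℕ) :
    SuspSimplex X n → SuspSimplex Y n
  | none => none
  | some c =>
      if h : F.f c.m c.x = Y.pt c.m then none
      else some ⟨c.j, c.m, F.f c.m c.x, c.hj, c.hdim, h⟩

/-- The map induced on the suspended chain complexes `s Ñ_*(-; K)` by a based simplicial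
map. -/
noncomputable def sChainMap (K : Type) [CommRing K] {X Y : BasedSSet} (F : BasedHom X Y) :
    ∀ n, SChain K X n →ₗ[K] SChain K Y n
  | 0 => 0
  | n + 1 => chainMap K X.toData Y.toData F.f n

/-
The non-degenerate simplices of `ΣX` other than the basepoint are exactly the `(x, 1)` with
`x` non-degenerate and not the basepoint: `(x, j)` with `j ≥ 2` is `s_0 (x, j - 1)`, and
`(s_i y, 1) = s_{i+1} (y, 1)`. So `x ↦ (x, 1)` matches the free generators in degrees `n` and
`n + 1`. Since `d_0 (x, 1)` is the basepoint and `d_{i+1} (x, 1) = (d_i x, 1)`, the shift of the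
face indices by one produces exactly the sign of `d (s v) = - s (d v)`. Naturality holds because
a based map acts on `(x, j)` through `x` alone.
-/

namespace BasedSSet

variable (X : BasedSSet)

/-- The simplex `(y, 1)` of `ΣX`, which is the basepoint when `y` is. -/
noncomputable def toSusp (n : ℕ) (y : X.X n) : SuspSimplex X (n + 1) :=
  if h : y = X.pt n then none else some ⟨1, n, y, le_refl 1, rfl, h⟩

variable {X}

lemma toSusp_of_ne {n : ℕ} {y : X.X n} (hy : y ≠ X.pt n) :
    X.toSusp n y = some ⟨1, n, y, le_refl 1, rfl, hy⟩ :=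
  dif_neg hy

lemma toSusp_pt (n : ℕ) : X.toSusp n (X.pt n) = none :=
  dif_pos rfl

lemma toSusp_eq_none_iff {n : ℕ} {y : X.X n} : X.toSusp n y = none ↔ y = X.pt n := by
  by_cases hy : y = X.pt n
  · simp [hy, toSusp_pt]
  · simp [hy, toSusp_of_ne hy]

lemma toSusp_injective (n : ℕ) : Function.Injective (X.toSusp n) := by
  intro y y' h
  by_cases hy : y = X.pt n
  · rw [hy, toSusp_pt, eq_comm, toSusp_eq_none_iff] at h
    rw [hy, h]
  by_cases hy' : y' = X.pt n
  · rw [hy', toSusp_pt, toSusp_eq_none_iff] at h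
    exact absurd h hy
  rw [toSusp_of_ne hy, toSusp_of_ne hy'] at h
  simpa using h

lemma suspD_zero_toSusp (n : ℕ) (y : X.X (n + 1)) :
    X.suspD (n + 1) 0 (X.toSusp (n + 1) y) = none := by
  unfold toSusp
  split <;> rfl

lemma suspD_succ_toSusp {n i : ℕ} (hi : i ≤ n + 1) (y : X.X (n + 1)) :
    X.suspD (n + 1) (i + 1) (X.toSusp (n + 1) y) = X.toSusp n (X.d n i y) := by
  by_cases hy : y = X.pt (n + 1)
  · rw [hy, X.d_pt n i hi, toSusp_pt, toSusp_pt]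
    rfl
  · rw [toSusp_of_ne hy]
    rfl

lemma suspS_zero_some {n : ℕ} (c : SuspCell X n) :
    X.suspS n 0 (some c) = some ⟨c.j + 1, c.m, c.x, by omega, by have := c.hdim; omega, c.hx⟩ :=
  if_pos c.hj

lemma suspS_succ_toSusp {n i : ℕ} (hi : i ≤ n) (y : X.X n) :
    X.suspS (n + 1) (i + 1) (X.toSusp n y) = X.toSusp (n + 1) (X.s n i y) := by
  by_cases hy : y = X.pt n
  · rw [hy, X.s_pt n i hi, toSusp_pt, toSusp_pt]
    rfl
  · rw [toSusp_of_ne hy]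
    rfl

lemma suspNondeg_toSusp_iff {n : ℕ} {y : X.X n} (hy : y ≠ X.pt n) :
    SuspNondeg X (n + 1) (X.toSusp n y) ↔ X.Nondeg n y := by
  constructor
  · intro h
    cases n with
    | zero => trivial
    | succ k =>
      rintro i hi z rfl
      exact h (i + 1) (by omega) (X.toSusp k z) (suspS_succ_toSusp hi z).symm
  · rintro hnd i hi (_ | ⟨j, m, x, hj, hdim, hx⟩) heq
    · rw [toSusp_of_ne hy] at heq
      exact Option.some_ne_none _ heq
    · rw [toSusp_of_ne hy] at heq
      simp only [suspS] at heq
      split_ifs at heq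
      · simp only [Option.some.injEq, SuspCell.mk.injEq] at heq
        omega
      · simp only [Option.some.injEq, SuspCell.mk.injEq] at heq
        obtain ⟨rfl, rfl, hxy⟩ := heq
        exact hnd _ (by omega) x (eq_of_heq hxy)

lemma exists_toSusp_eq {n : ℕ} (c : SuspCell X (n + 1)) (h : SuspNondeg X (n + 1) (some c)) :
    ∃ y, X.toSusp n y = some c := by
  obtain ⟨j, m, x, hj, hdim, hx⟩ := c
  obtain rfl : j = 1 := by
    by_contra hj1
    exact h 0 n.zero_le (some ⟨j - 1, m, x, by omega, by omega, hx⟩)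
      ((suspS_zero_some _).trans (by congr; dsimp only; omega)).symm
  obtain rfl : m = n := by omega
  exact ⟨x, toSusp_of_ne hx⟩

lemma suspMap_toSusp {Y : BasedSSet} (F : BasedHom X Y) (n : ℕ) (y : X.X n) :
    suspMap F (n + 1) (X.toSusp n y) = Y.toSusp n (F.f n y) := by
  by_cases hy : y = X.pt n
  · rw [hy, F.hpt, toSusp_pt, toSusp_pt]
    rfl
  · rw [toSusp_of_ne hy]
    rfl

variable (X)

noncomputable def suspGenEquiv (n : ℕ) :
    {x : X.toData.C n // X.toData.nd n x ∧ x ≠ X.toData.pt n} ≃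
      {z : X.suspData.C (n + 1) // X.suspData.nd (n + 1) z ∧ z ≠ X.suspData.pt (n + 1)} :=
  Equiv.ofBijective
    (fun y => ⟨X.toSusp n y.1, (suspNondeg_toSusp_iff y.2.2).2 y.2.1,
      toSusp_eq_none_iff.not.2 y.2.2⟩)
    ⟨fun _ _ h => Subtype.ext (toSusp_injective n (congrArg Subtype.val h)), by
      rintro ⟨_ | c, hnd, hne⟩
      · exact absurd rfl hne
      obtain ⟨y, hy⟩ := exists_toSusp_eq c hnd
      have hy0 : y ≠ X.pt n := toSusp_eq_none_iff.not.1 (hy ▸ Option.some_ne_none c)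
      exact ⟨⟨y, (suspNondeg_toSusp_iff hy0).1 (hy ▸ hnd), hy0⟩, Subtype.ext hy⟩⟩

instance isEmpty_suspGen_zero :
    IsEmpty {z : X.suspData.C 0 // X.suspData.nd 0 z ∧ z ≠ X.suspData.pt 0} := by
  refine ⟨fun ⟨z, _, hz⟩ => ?_⟩
  obtain _ | c := z
  · exact hz rfl
  · have := c.hj
    have := c.hdim
    omega

end BasedSSet

section Chains

variable (K : Type) [CommRing K]

lemma redD_single (D : ChainData) (n : ℕ)
    (x : {x : D.C (n + 1) // D.nd (n + 1) x ∧ x ≠ D.pt (n + 1)}) (b : K) :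
    redD K D n (Finsupp.single x b) =
      b • ∑ i ∈ Finset.range (n + 2), ((-1 : K) ^ i) • elemOf K D n (D.face n i x.1) := by
  simp [redD, Finsupp.lift_apply, Finsupp.sum_single_index]

lemma chainMap_single (D E : ChainData) (g : ∀ n, D.C n → E.C n) (n : ℕ)
    (x : {x : D.C n // D.nd n x ∧ x ≠ D.pt n}) (b : K) :
    chainMap K D E g n (Finsupp.single x b) = b • elemOf K E n (g n x.1) := by
  simp [chainMap, Finsupp.lift_apply, Finsupp.sum_single_index]

lemma domLCongr_elemOf {D E : ChainData} {n n' : ℕ} (g : D.C n → E.C n')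
    (e : {x // D.nd n x ∧ x ≠ D.pt n} ≃ {x // E.nd n' x ∧ x ≠ E.pt n'})
    (he : ∀ x, (e x).1 = g x.1)
    (hg : ∀ y, E.nd n' (g y) ∧ g y ≠ E.pt n' → D.nd n y ∧ y ≠ D.pt n) (y : D.C n) :
    Finsupp.domLCongr (M := K) (R := K) e (elemOf K D n y) = elemOf K E n' (g y) := by
  unfold elemOf
  by_cases hy : D.nd n y ∧ y ≠ D.pt n
  · have hgy : E.nd n' (g y) ∧ g y ≠ E.pt n' := he ⟨y, hy⟩ ▸ (e ⟨y, hy⟩).2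
    rw [dif_pos hy, dif_pos hgy, Finsupp.domLCongr_single]
    exact congrArg (Finsupp.single · 1) (Subtype.ext (he _))
  · rw [dif_neg hy, dif_neg (mt (hg y) hy), map_zero]

end Chains

namespace BasedSSet

variable (K : Type) [CommRing K] (X : BasedSSet)

noncomputable def suspRedChainsEquiv (n : ℕ) :
    RedChains K X.toData n ≃ₗ[K] RedChains K X.suspData (n + 1) :=
  Finsupp.domLCongr (X.suspGenEquiv n)

variable {X}

lemma suspRedChainsEquiv_single {n : ℕ}
    (y : {x : X.toData.C n // X.toData.nd n x ∧ x ≠ X.toData.pt n}) (b : K) :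
    X.suspRedChainsEquiv K n (Finsupp.single y b) = Finsupp.single (X.suspGenEquiv n y) b :=
  Finsupp.domLCongr_single _ _ _

lemma suspRedChainsEquiv_elemOf (n : ℕ) (y : X.X n) :
    X.suspRedChainsEquiv K n (elemOf K X.toData n y) =
      elemOf K X.suspData (n + 1) (X.toSusp n y) := by
  refine domLCongr_elemOf K (X.toSusp n) (X.suspGenEquiv n) (fun _ => rfl) (fun y h => ?_) y
  obtain ⟨hnd, hne⟩ := h
  have hy : y ≠ X.pt n := toSusp_eq_none_iff.not.1 hne
  exact ⟨(suspNondeg_toSusp_iff hy).1 hnd, hy⟩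

lemma elemOf_suspData_none (n : ℕ) : elemOf K X.suspData n none = 0 :=
  dif_neg fun h => h.2 rfl

lemma sum_faces_toSusp (n : ℕ) (y : X.X (n + 1)) :
    ∑ i ∈ Finset.range (n + 3),
        ((-1 : K) ^ i) • elemOf K X.suspData (n + 1) (X.suspD (n + 1) i (X.toSusp (n + 1) y)) =
      -∑ i ∈ Finset.range (n + 2),
        ((-1 : K) ^ i) • elemOf K X.suspData (n + 1) (X.toSusp n (X.d n i y)) := by
  rw [Finset.sum_range_succ', suspD_zero_toSusp, elemOf_suspData_none, smul_zero, add_zero,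
    ← Finset.sum_neg_distrib]
  refine Finset.sum_congr rfl fun i hi => ?_
  rw [suspD_succ_toSusp (Nat.lt_succ_iff.1 (Finset.mem_range.1 hi)), pow_succ, mul_neg_one,
    neg_smul]

lemma suspRedChainsEquiv_neg_redD (n : ℕ) (v : RedChains K X.toData (n + 1)) :
    X.suspRedChainsEquiv K n (-redD K X.toData n v) =
      redD K X.suspData (n + 1) (X.suspRedChainsEquiv K (n + 1) v) := by
  induction v using Finsupp.induction_linear with
  | zero => simp only [map_zero, neg_zero]
  | add v w hv hw => simp only [map_add, neg_add, hv, hw]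
  | single y b =>
    rw [suspRedChainsEquiv_single, redD_single, redD_single, map_neg, map_smul, map_sum]
    simp only [map_smul]
    rw [← smul_neg]
    refine congrArg (b • ·) ((sum_faces_toSusp K n y.1).trans
      (congrArg Neg.neg (Finset.sum_congr rfl fun i _ => ?_))).symm
    exact congrArg _ (suspRedChainsEquiv_elemOf K n _).symm

lemma suspRedChainsEquiv_chainMap {Y : BasedSSet} (F : BasedHom X Y) (n : ℕ)
    (v : RedChains K X.toData n) :
    Y.suspRedChainsEquiv K n (chainMap K X.toData Y.toData F.f n v) =
      chainMap K X.suspData Y.suspData (suspMap F) (n + 1)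
        (X.suspRedChainsEquiv K n v) := by
  induction v using Finsupp.induction_linear with
  | zero => simp only [map_zero]
  | add v w hv hw => simp only [map_add, hv, hw]
  | single y b =>
    rw [suspRedChainsEquiv_single, chainMap_single K X.toData Y.toData F.f,
      chainMap_single K X.suspData Y.suspData (suspMap F), map_smul, suspRedChainsEquiv_elemOf]
    exact congrArg (b • elemOf K Y.suspData (n + 1) ·) (suspMap_toSusp F n y.1).symm

variable (X)

noncomputable def suspChainEquiv : ∀ n, SChain K X n ≃ₗ[K] RedChains K X.suspData n
  | 0 => Finsupp.domLCongr (Equiv.equivOfIsEmpty Empty _)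
  | n + 1 => X.suspRedChainsEquiv K n

variable {X}

lemma suspChainEquiv_d (n : ℕ) (v : SChain K X (n + 1)) :
    X.suspChainEquiv K n (sD K X n v) = redD K X.suspData n (X.suspChainEquiv K (n + 1) v) := by
  cases n with
  | zero => exact Subsingleton.elim _ _
  | succ n => exact suspRedChainsEquiv_neg_redD K n v

lemma suspChainEquiv_natural {Y : BasedSSet} (F : BasedHom X Y) (n : ℕ) (v : SChain K X n) :
    Y.suspChainEquiv K n (sChainMap K F n v) =
      chainMap K X.suspData Y.suspData (suspMap F) n (X.suspChainEquiv K n v) := by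
  cases n with
  | zero => exact Subsingleton.elim _ _
  | succ n => exact suspRedChainsEquiv_chainMap K F n v

end BasedSSet

/-- For every commutative ring `K` there is a natural isomorphism of chain complexes of
`K`-modules `φ : s Ñ_*(X; K) → Ñ_*(ΣX; K)`: a family of `K`-linear isomorphisms in each
degree, commuting with the differentials (where `s Ñ_*(X; K)` carries the Koszul-signed
differential `d (s v) = - s (d v)`), defined on generators by `φ (s x) = (x, 1)` for each
non-degenerate simplex `x` of `X`, and natural in `X`: for every based simplicial map
`f : X → Y` the isomorphisms commute with the induced maps on reduced normalized
chains. -/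
theorem susp_chain_iso (K : Type) [CommRing K] :
    ∃ φ : ∀ (X : BasedSSet) (n : ℕ), SChain K X n ≃ₗ[K] RedChains K X.suspData n,
      (∀ (X : BasedSSet) (n : ℕ) (v : SChain K X (n + 1)),
          φ X n (sD K X n v) = redD K X.suspData n (φ X (n + 1) v)) ∧
      (∀ (X : BasedSSet) (m : ℕ) (x : {x : X.X m // X.Nondeg m x ∧ x ≠ X.pt m}),
          ∃ h : SuspNondeg X (m + 1) (some ⟨1, m, x.1, le_refl 1, rfl, x.2.2⟩) ∧
              (some ⟨1, m, x.1, le_refl 1, rfl, x.2.2⟩ : SuspSimplex X (m + 1)) ≠ none,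
            φ X (m + 1) (Finsupp.single x 1) =
              Finsupp.single ⟨some ⟨1, m, x.1, le_refl 1, rfl, x.2.2⟩, h⟩ 1) ∧
      (∀ (X Y : BasedSSet) (F : BasedHom X Y) (n : ℕ) (v : SChain K X n),
          φ Y n (sChainMap K F n v) =
            chainMap K X.suspData Y.suspData (suspMap F) n (φ X n v)) := by
  refine ⟨fun X => X.suspChainEquiv K, fun X => BasedSSet.suspChainEquiv_d K,
    fun X m x => ?_, fun X Y F => BasedSSet.suspChainEquiv_natural K F⟩
  have hx := BasedSSet.toSusp_of_ne x.2.2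
  refine ⟨hx ▸ (X.suspGenEquiv m x).2, ?_⟩
  exact (X.suspRedChainsEquiv_single K x 1).trans <|
    congrArg (Finsupp.single · 1) (Subtype.ext hx)
end
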